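/- arXiv:2008.07757 — 5 statements merged into one kernel-verified Lean document; each statement's English description precedes it below -/
import Mathlib

section
/- Let (d_v)_{v∈V} be nonnegative reals with maximum Δ and M̃_j = Σ_{K∈binom(V,j)} ∏_{v∈K} d_v. Then |M̃_1·M̃_{j-1} − j·M̃_j| ≤ jΔ·M̃_{j-1}. -/
open Finset

lemma key_bij {ι : Type*} [DecidableEq ι] (s : Finset ι) (d : ι → ℝ) (j : ℕ) (hj : 1 ≤ j) :
    ∑ K ∈ s.powersetCard (j - 1), ∑ v ∈ s \ K, ∏ x ∈ insert v K, d x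
      = ∑ L ∈ s.powersetCard j, ∑ v ∈ L, ∏ x ∈ L, d x := by
  rw [Finset.sum_sigma', Finset.sum_sigma']
  refine Finset.sum_nbij' (fun p => ⟨insert p.2 p.1, p.2⟩) (fun p => ⟨p.1.erase p.2, p.2⟩)
    ?_ ?_ ?_ ?_ ?_
  · rintro ⟨K, v⟩ hp
    simp only [Finset.mem_sigma, Finset.mem_powersetCard, Finset.mem_sdiff] at hp ⊢
    obtain ⟨⟨hKs, hKc⟩, hvs, hvK⟩ := hp
    refine ⟨⟨Finset.insert_subset hvs hKs, ?_⟩, Finset.mem_insert_self _ _⟩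
    rw [Finset.card_insert_of_notMem hvK, hKc]
    omega
  · rintro ⟨L, v⟩ hp
    simp only [Finset.mem_sigma, Finset.mem_powersetCard, Finset.mem_sdiff] at hp ⊢
    obtain ⟨⟨hLs, hLc⟩, hvL⟩ := hp
    refine ⟨⟨(Finset.erase_subset _ _).trans hLs, ?_⟩, hLs hvL, Finset.notMem_erase _ _⟩
    rw [Finset.card_erase_of_mem hvL, hLc]
  · rintro ⟨K, v⟩ hp
    simp only [Finset.mem_sigma, Finset.mem_sdiff] at hp
    simp [Finset.erase_insert_of_ne, Finset.erase_insert hp.2.2]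
  · rintro ⟨L, v⟩ hp
    simp only [Finset.mem_sigma] at hp
    simp [Finset.insert_erase hp.2]
  · rintro ⟨K, v⟩ hp
    rfl

/-- `|M̃_1·M̃_{j-1} − j·M̃_j| ≤ j·Δ·M̃_{j-1}` where `Δ = max_{v∈s} d v`. -/
theorem stmt1 {ι : Type*} [DecidableEq ι] (s : Finset ι) (hs : s.Nonempty) (d : ι → ℝ)
    (hd : ∀ v ∈ s, 0 ≤ d v) (j : ℕ) (hj : 1 ≤ j) :
    |(∑ K ∈ s.powersetCard 1, ∏ v ∈ K, d v) *
        (∑ K ∈ s.powersetCard (j - 1), ∏ v ∈ K, d v) -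
      (j : ℝ) * ∑ K ∈ s.powersetCard j, ∏ v ∈ K, d v|
      ≤ (j : ℝ) * (s.sup' hs d) * ∑ K ∈ s.powersetCard (j - 1), ∏ v ∈ K, d v := by
  obtain ⟨w, hw⟩ := id hs
  have hΔ0 : 0 ≤ s.sup' hs d := le_trans (hd w hw) (Finset.le_sup' d hw)
  have hM1 : (∑ K ∈ s.powersetCard 1, ∏ v ∈ K, d v) = ∑ v ∈ s, d v := by
    rw [Finset.powersetCard_one]
    simp
  -- expand the product
  have hsplit : (∑ K ∈ s.powersetCard 1, ∏ v ∈ K, d v) *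
      (∑ K ∈ s.powersetCard (j - 1), ∏ v ∈ K, d v)
      = (∑ K ∈ s.powersetCard (j - 1), ∑ v ∈ s \ K, ∏ x ∈ insert v K, d x)
        + ∑ K ∈ s.powersetCard (j - 1), (∑ v ∈ K, d v) * ∏ x ∈ K, d x := by
    rw [hM1, mul_comm, Finset.sum_mul, ← Finset.sum_add_distrib]
    refine Finset.sum_congr rfl fun K hK => ?_
    rw [Finset.mem_powersetCard] at hK
    rw [Finset.mul_sum, ← Finset.sum_sdiff hK.1]
    congr 1
    · refine Finset.sum_congr rfl fun v hv => ?_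
      rw [Finset.mem_sdiff] at hv
      rw [Finset.prod_insert hv.2, mul_comm]
    · rw [← Finset.mul_sum, mul_comm]
  have hkey : (∑ K ∈ s.powersetCard (j - 1), ∑ v ∈ s \ K, ∏ x ∈ insert v K, d x)
      = (j : ℝ) * ∑ K ∈ s.powersetCard j, ∏ v ∈ K, d v := by
    rw [key_bij s d j hj, Finset.mul_sum]
    refine Finset.sum_congr rfl fun L hL => ?_
    rw [Finset.mem_powersetCard] at hL
    rw [Finset.sum_const, hL.2, nsmul_eq_mul]
  rw [hsplit, hkey, add_sub_cancel_left]
  have hprodnn : ∀ K ∈ s.powersetCard (j - 1), (0:ℝ) ≤ ∏ x ∈ K, d x := by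
    intro K hK
    rw [Finset.mem_powersetCard] at hK
    exact Finset.prod_nonneg fun x hx => hd x (hK.1 hx)
  rw [abs_of_nonneg]
  · rw [Finset.mul_sum]
    refine Finset.sum_le_sum fun K hK => ?_
    have hK' := hK
    rw [Finset.mem_powersetCard] at hK'
    refine mul_le_mul_of_nonneg_right ?_ (hprodnn K hK)
    calc ∑ v ∈ K, d v ≤ ∑ v ∈ K, s.sup' hs d :=
          Finset.sum_le_sum fun v hv => Finset.le_sup' d (hK'.1 hv)
      _ = (K.card : ℝ) * s.sup' hs d := by rw [Finset.sum_const, nsmul_eq_mul]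
      _ ≤ (j : ℝ) * s.sup' hs d := by
          refine mul_le_mul_of_nonneg_right ?_ hΔ0
          have : K.card ≤ j := by omega
          exact_mod_cast this
  · refine Finset.sum_nonneg fun K hK => ?_
    have hK' := hK
    rw [Finset.mem_powersetCard] at hK'
    exact mul_nonneg (Finset.sum_nonneg fun v hv => hd v (hK'.1 hv)) (hprodnn K hK)
end

section
/- Let d ∈ ℤ^n be a sequence with maximum entry Δ and Σ_v d_v = nd̄ ≡ 0 (mod k). If there exists an integer p with Δ ≤ binom(p−1, k−1) and nd̄ ≥ (Δ−1)p + 1, then (assuming this criterion, stated as a hypothesis) the following holds: if 20k < n, Δ ≤ (1 + 1/(3k))·d̄ ≤ (1/4)·binom(n−1,k−1), and d̄ ≥ 1, then there exists a k-uniform hypergraph on [n] with degree sequence d. -/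
/-!
Apply the criterion with `p = ⌊3kn / (3k + 1)⌋`. Since `(3k + 1) p ≤ 3kn` and
`Δ ≤ (1 + 1/(3k)) d̄`, we get `Δ p ≤ n d̄`, which gives the second condition. For the first,
passing from `binom(n - 1, k - 1)` to `binom(p - 1, k - 1)` lowers the top index `s = n - p`
times, each time losing at most the fraction `(k - 1) / (p - 1)`; as `n > 20k` forces
`4 (k - 1) s ≤ 3 (p - 1)`, at least a quarter survives, and `Δ ≤ binom(n - 1, k - 1) / 4`.
-/

open Finset

/-- `d` is `k`-graphical: some `k`-uniform hypergraph on `[n]` has degree sequence `d`. -/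
def IsKGraphical (n k : ℕ) (d : Fin n → ℤ) : Prop :=
  ∃ H : Finset (Finset (Fin n)), (∀ e ∈ H, e.card = k) ∧
    ∀ v, ((H.filter (fun e => v ∈ e)).card : ℤ) = d v

namespace Nat

theorem sub_mul_choose_sub_choose_sub_le (t r s : ℕ) :
    ((t : ℤ) - s) * (t.choose r - (t - s).choose r) ≤ s * r * t.choose r := by
  induction s with
  | zero => simp
  | succ s ih =>
    rcases le_or_gt t s with hts | hst
    · have hC : ((t - (s + 1)).choose r : ℤ) ≤ t.choose r := by
        exact_mod_cast choose_le_choose r (t.sub_le _)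
      have : (t : ℤ) - (s + 1 : ℕ) ≤ 0 := by omega
      exact (mul_nonpos_of_nonpos_of_nonneg this (by linarith)).trans (by positivity)
    obtain ⟨a, ha⟩ : ∃ a, t - s = a + 1 := ⟨t - s - 1, by omega⟩
    rw [ha, show (t : ℤ) - s = a + 1 by omega] at ih
    rw [show t - (s + 1) = a by omega, show (t : ℤ) - (s + 1 : ℕ) = a by omega]
    -- lowering the top index from `a + 1` to `a` loses the fraction `r / (a + 1)` of the binomial
    have hstep : ((a : ℤ) + 1) * a.choose r = ((a : ℤ) + 1 - r) * ((a + 1).choose r : ℤ) := by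
      rcases le_or_gt r (a + 1) with hr | hr
      · have := choose_mul_succ_eq a r
        zify [hr] at this
        linarith
      · simp [choose_eq_zero_of_lt hr, choose_eq_zero_of_lt (by omega : a < r)]
    have hX : ((a + 1).choose r : ℤ) ≤ t.choose r := by
      exact_mod_cast choose_le_choose r (by omega : a + 1 ≤ t)
    have ha0 : (0 : ℤ) ≤ a := a.cast_nonneg
    push_cast
    refine le_of_mul_le_mul_left ?_ (by positivity : (0 : ℤ) < a + 1)
    nlinarith [mul_le_mul_of_nonneg_left ih ha0, mul_le_mul_of_nonneg_left hX ha0,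
      mul_le_mul_of_nonneg_left hX r.cast_nonneg]

theorem choose_le_four_mul_choose_sub {t r s : ℕ} (h : 4 * r * s ≤ 3 * (t - s)) :
    t.choose r ≤ 4 * (t - s).choose r := by
  rcases Nat.eq_zero_or_pos (t - s) with hts | hts
  · rw [hts, Nat.mul_zero, Nat.le_zero] at h
    rcases (by simpa using h : r = 0 ∨ s = 0) with rfl | rfl
    · simp
    · simp only [Nat.sub_zero]; omega
  have key := sub_mul_choose_sub_choose_sub_le t r s
  have hcast : ((t - s : ℕ) : ℤ) = (t : ℤ) - s := by omega
  have h' : (4 * r * s : ℤ) ≤ 3 * ((t : ℤ) - s) := by rw [← hcast]; exact_mod_cast h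
  have hpos : (0 : ℤ) < (t : ℤ) - s := by omega
  zify
  refine le_of_mul_le_mul_left ?_ hpos
  nlinarith [mul_le_mul_of_nonneg_right h' (t.choose r).cast_nonneg]

end Nat

theorem exists_criterion_parameter (k n : ℕ) (hk : 1 ≤ k) (hn : 20 * k < n) :
    ∃ p, 1 ≤ p ∧ p ≤ n ∧ (3 * k + 1) * p ≤ 3 * k * n ∧ 4 * (k - 1) * (n - p) ≤ 3 * (p - 1) := by
  refine ⟨3 * k * n / (3 * k + 1), ?_⟩
  set p := 3 * k * n / (3 * k + 1)
  have hle : (3 * k + 1) * p ≤ 3 * k * n := Nat.mul_div_le _ _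
  have hlt : 3 * k * n < (3 * k + 1) * (p + 1) := Nat.lt_mul_div_succ _ (by omega)
  have hpn : p ≤ n := Nat.le_of_mul_le_mul_left (by nlinarith) (by omega : 0 < 3 * k + 1)
  have hp1 : 1 ≤ p := by nlinarith
  refine ⟨hp1, hpn, hle, ?_⟩
  obtain ⟨j, rfl⟩ : ∃ j, k = j + 1 := ⟨k - 1, by omega⟩
  zify [hpn, hp1] at hle hlt hn ⊢
  push_cast at hle hlt hn ⊢
  nlinarith

theorem mul_le_of_le_one_add_one_div_mul {K : Type*} [Field K] [LinearOrder K]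
    [IsStrictOrderedRing K] {c Δ d p n : K} (hc : 0 < c) (hΔ : 0 ≤ Δ) (hp : 0 ≤ p)
    (hΔd : Δ ≤ (1 + 1 / c) * d) (hpn : (c + 1) * p ≤ c * n) : Δ * p ≤ n * d := by
  have hcd : c * Δ ≤ (c + 1) * d :=
    calc c * Δ ≤ c * ((1 + 1 / c) * d) := mul_le_mul_of_nonneg_left hΔd hc.le
      _ = (c + 1) * d := by field_simp
  have hn : 0 ≤ n := by nlinarith
  refine le_of_mul_le_mul_left ?_ (by linarith : 0 < c + 1)
  nlinarith [mul_le_mul_of_nonneg_left hpn hΔ, mul_le_mul_of_nonneg_left hcd hn]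

theorem stmt4_general (n k : ℕ) (d : Fin n → ℤ) (Δ : ℤ) (dbar : ℚ)
    (hk : 1 ≤ k) (hn : 20 * k < n)
    (hΔ : IsGreatest (Set.range d) Δ)
    (havg : ((∑ v, d v : ℤ) : ℚ) = (n : ℚ) * dbar)
    (hcrit : (∃ p : ℕ, (Δ : ℚ) ≤ ((p - 1).choose (k - 1) : ℚ) ∧
        ((Δ : ℚ) - 1) * (p : ℚ) + 1 ≤ (n : ℚ) * dbar) → IsKGraphical n k d)
    (h1 : (Δ : ℚ) ≤ (1 + 1 / (3 * (k : ℚ))) * dbar)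
    (h2 : (1 + 1 / (3 * (k : ℚ))) * dbar ≤ (1 / 4) * ((n - 1).choose (k - 1) : ℚ))
    (h3 : 1 ≤ dbar) :
    IsKGraphical n k d := by
  obtain ⟨p, hp1, hpn, hp_mul, hp_choose⟩ := exists_criterion_parameter k n hk hn
  have hdbar_le : dbar ≤ Δ := by
    have hsum : ∑ v, d v ≤ n * Δ := by
      simpa using Finset.sum_le_card_nsmul univ d Δ fun v _ => hΔ.2 ⟨v, rfl⟩
    have hn0 : (0 : ℚ) < n := by exact_mod_cast (by omega : 0 < n)
    refine le_of_mul_le_mul_left ?_ hn0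
    rw [← havg]
    exact_mod_cast hsum
  refine hcrit ⟨p, ?_, ?_⟩
  · have hchoose := Nat.choose_le_four_mul_choose_sub (t := n - 1) (r := k - 1) (s := n - p)
      (by rwa [show n - 1 - (n - p) = p - 1 by omega])
    rw [show n - 1 - (n - p) = p - 1 by omega] at hchoose
    have : ((n - 1).choose (k - 1) : ℚ) ≤ 4 * (p - 1).choose (k - 1) := by exact_mod_cast hchoose
    linarith
  · have hp_mul' : (3 * k + 1 : ℚ) * p ≤ 3 * k * n := by exact_mod_cast hp_mul
    have hΔp : (Δ : ℚ) * p ≤ n * dbar :=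
      mul_le_of_le_one_add_one_div_mul (by positivity) (by linarith) p.cast_nonneg h1 hp_mul'
    have : (1 : ℚ) ≤ p := by exact_mod_cast hp1
    linarith

/-- assuming the Behrens–Erdős–Frankl type criterion (as a hypothesis),
if `20k < n`, `Δ ≤ (1+1/(3k))·d̄ ≤ (1/4)·binom(n−1,k−1)` and `d̄ ≥ 1`, then `d` is
`k`-graphical. -/
theorem stmt4 (n k : ℕ) (d : Fin n → ℤ) (Δ : ℤ) (dbar : ℚ)
    (hk : 1 ≤ k) (hn : 20 * k < n)
    (hΔ : IsGreatest (Set.range d) Δ)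
    (havg : ((∑ v, d v : ℤ) : ℚ) = (n : ℚ) * dbar)
    (hdvd : (k : ℤ) ∣ ∑ v, d v)
    (hcrit : (∃ p : ℕ, (Δ : ℚ) ≤ ((p - 1).choose (k - 1) : ℚ) ∧
        ((Δ : ℚ) - 1) * (p : ℚ) + 1 ≤ (n : ℚ) * dbar) → IsKGraphical n k d)
    (h1 : (Δ : ℚ) ≤ (1 + 1 / (3 * (k : ℚ))) * dbar)
    (h2 : (1 + 1 / (3 * (k : ℚ))) * dbar ≤ (1 / 4) * ((n - 1).choose (k - 1) : ℚ))
    (h3 : 1 ≤ dbar) :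
    IsKGraphical n k d :=
  stmt4_general n k d Δ dbar hk hn hΔ havg hcrit h1 h2 h3
end

section
/- Assume the graphicality criterion: if Σ_v d_v = nd̄ ≡ 0 (mod k) and there is an integer p with max_v d_v ≤ binom(p−1,k−1) and nd̄ ≥ (max_v d_v −1)p+1, then d is k-graphical. Under this assumption, if 20k < n and k·Δ^{1+1/(k−1)} ≤ (1/2)·d̄n where Δ = max_v d_v, then d is k-graphical. -/
/-!
Apply the criterion with `p = ⌈k t⌉`, where `t = Δ^{1/(k-1)}`. Since `t ≥ 1` we get
`p - 1 ≥ (k - 1) t`, hence `C(p-1, k-1) ≥ ((p-1)/(k-1))^{k-1} ≥ t^{k-1} = Δ`; and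
`(Δ - 1) p + 1 ≤ k Δ t + Δ ≤ 2 k Δ^{1+1/(k-1)} ≤ n d̄`. When `Δ ≤ 0` any large `p` works.
-/

open Finset

theorem Nat.pow_le_pow_mul_choose {r m : ℕ} (h : r ≤ m) : m ^ r ≤ r ^ r * m.choose r := by
  -- each factor `(m - i) / (r - i)` of `C(m, r)` is at least `m / r`
  have hfactor (i : ℕ) (hi : i ∈ range r) : m * (r - i) ≤ r * (m - i) := by
    have := mem_range.1 hi
    zify [this.le, this.le.trans h]
    nlinarith
  have hprod := prod_le_prod' (f := fun i => m * (r - i)) (g := fun i => r * (m - i)) hfactor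
  simp only [prod_mul_distrib, prod_const, card_range, ← descFactorial_eq_prod_range,
    descFactorial_self, descFactorial_eq_factorial_mul_choose] at hprod
  exact Nat.le_of_mul_le_mul_right (by linarith [hprod]) r.factorial_pos

theorem Nat.pow_le_choose_of_mul_le {r m : ℕ} (hr : 0 < r) {t : ℝ} (ht : 1 ≤ t)
    (h : r * t ≤ m) : t ^ r ≤ m.choose r := by
  have hrm : r ≤ m := by exact_mod_cast (le_mul_of_one_le_right (by positivity) ht).trans h
  have hchoose : (m : ℝ) ^ r ≤ (r : ℝ) ^ r * m.choose r := by
    exact_mod_cast Nat.pow_le_pow_mul_choose hrm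
  refine le_of_mul_le_mul_left ?_ (by positivity : (0 : ℝ) < (r : ℝ) ^ r)
  calc (r : ℝ) ^ r * t ^ r = (r * t) ^ r := (mul_pow _ _ _).symm
    _ ≤ (m : ℝ) ^ r := pow_le_pow_left₀ (by positivity) h r
    _ ≤ _ := hchoose

theorem exists_criterion_witness_of_nonpos {Δ : ℤ} (hΔ : Δ ≤ 0) (k : ℕ) (N : ℝ) :
    ∃ p : ℕ, (Δ : ℝ) ≤ (p - 1).choose (k - 1) ∧ ((Δ : ℝ) - 1) * p + 1 ≤ N := by
  have hΔ' : (Δ : ℝ) ≤ 0 := by exact_mod_cast hΔ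
  refine ⟨⌈1 - N⌉₊, hΔ'.trans (Nat.cast_nonneg _), ?_⟩
  nlinarith [Nat.le_ceil (1 - N), (Nat.cast_nonneg _ : (0 : ℝ) ≤ ⌈1 - N⌉₊)]

theorem exists_criterion_witness_of_rpow_le {k : ℕ} (hk : 2 ≤ k) {Δ : ℤ} (hΔ : 1 ≤ Δ) {N : ℝ}
    (h : k * (Δ : ℝ) ^ (1 + 1 / ((k : ℝ) - 1)) ≤ 1 / 2 * N) :
    ∃ p : ℕ, (Δ : ℝ) ≤ (p - 1).choose (k - 1) ∧ ((Δ : ℝ) - 1) * p + 1 ≤ N := by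
  have hx : (1 : ℝ) ≤ Δ := by exact_mod_cast hΔ
  set x : ℝ := (Δ : ℝ)
  have hk' : (2 : ℝ) ≤ k := by exact_mod_cast hk
  have hk1 : (0 : ℝ) < k - 1 := by linarith
  have hkcast : ((k - 1 : ℕ) : ℝ) = k - 1 := by rw [Nat.cast_sub (by omega), Nat.cast_one]
  set t := x ^ ((k - 1 : ℕ) : ℝ)⁻¹
  have ht : 1 ≤ t := Real.one_le_rpow hx (by positivity)
  have htpow : t ^ (k - 1) = x := Real.rpow_inv_natCast_pow (by positivity) (by omega)
  have hxt : x ^ (1 + 1 / ((k : ℝ) - 1)) = x * t := by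
    rw [Real.rpow_one_add' (by positivity) (by positivity), one_div, ← hkcast]
  rw [hxt] at h
  set p := ⌈k * t⌉₊
  have hp_ge : k * t ≤ p := Nat.le_ceil _
  have hp_lt : (p : ℝ) < k * t + 1 := Nat.ceil_lt_add_one (by positivity)
  have hp : 1 ≤ p := by exact_mod_cast (by nlinarith : (1 : ℝ) ≤ p)
  refine ⟨p, ?_, ?_⟩
  · rw [← htpow]
    refine Nat.pow_le_choose_of_mul_le (by omega) ht ?_
    rw [hkcast, Nat.cast_sub hp, Nat.cast_one]
    nlinarith
  · have hxt_pos : 0 ≤ x * t := by positivity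
    nlinarith [mul_le_mul_of_nonneg_left hp_lt.le (by linarith : (0 : ℝ) ≤ x - 1),
      le_mul_of_one_le_right (by positivity : (0 : ℝ) ≤ x) ht,
      mul_le_mul_of_nonneg_right hk' hxt_pos]

theorem stmt5_general (n k : ℕ) (d : Fin n → ℤ) (Δ : ℤ) (dbar : ℚ)
    (hk : 2 ≤ k)
    (hcrit : (∃ p : ℕ, (Δ : ℚ) ≤ ((p - 1).choose (k - 1) : ℚ) ∧
        ((Δ : ℚ) - 1) * (p : ℚ) + 1 ≤ (n : ℚ) * dbar) → IsKGraphical n k d)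
    (hmain : (k : ℝ) * (Δ : ℝ) ^ (1 + 1 / ((k : ℝ) - 1)) ≤ (1 / 2) * (dbar : ℝ) * (n : ℝ)) :
    IsKGraphical n k d := by
  have hmain' : (k : ℝ) * (Δ : ℝ) ^ (1 + 1 / ((k : ℝ) - 1)) ≤ 1 / 2 * ((n : ℝ) * dbar) := by
    linarith
  obtain ⟨p, hchoose, hsum⟩ := (le_or_gt Δ 0).elim
    (exists_criterion_witness_of_nonpos · k _) (exists_criterion_witness_of_rpow_le hk · hmain')
  exact hcrit ⟨p, by exact_mod_cast hchoose, by exact_mod_cast hsum⟩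

/-- assuming the graphicality criterion (as a hypothesis),
if `20k < n` and `k·Δ^{1+1/(k−1)} ≤ (1/2)·d̄·n`, then `d` is `k`-graphical. -/
theorem stmt5 (n k : ℕ) (d : Fin n → ℤ) (Δ : ℤ) (dbar : ℚ)
    (hk : 2 ≤ k) (hn : 20 * k < n)
    (hd : ∀ v, 0 ≤ d v)
    (hΔ : IsGreatest (Set.range d) Δ)
    (havg : ((∑ v, d v : ℤ) : ℚ) = (n : ℚ) * dbar)
    (hdvd : (k : ℤ) ∣ ∑ v, d v)
    (hcrit : (∃ p : ℕ, (Δ : ℚ) ≤ ((p - 1).choose (k - 1) : ℚ) ∧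
        ((Δ : ℚ) - 1) * (p : ℚ) + 1 ≤ (n : ℚ) * dbar) → IsKGraphical n k d)
    (hmain : (k : ℝ) * (Δ : ℝ) ^ (1 + 1 / ((k : ℝ) - 1)) ≤ (1 / 2) * (dbar : ℝ) * (n : ℝ)) :
    IsKGraphical n k d :=
  stmt5_general n k d Δ dbar hk hcrit hmain
end

section
/- Let μ ∈ (0, 1/2), and reals ε_a, ε_b, β with |ε_a|, |ε_b| ≤ ε and |β| ≤ B, and suppose (1−μ)(1−α) + ε_x + (ε_a+ε_b)β > 1/2 for x ∈ {a,b} and (1−μ)(1−α) + ε_x > 1/2. Then |[((1−μ)(1−α)+ε_a+(ε_a+ε_b)β)/((1−μ)(1−α)+ε_b+(ε_a+ε_b)β)] · [((1−μ)(1−α)+ε_b)/((1−μ)(1−α)+ε_a)] − 1| ≤ 16·ε²·B. -/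
/-!
Over the common denominator, the terms in `(1 - μ)(1 - α)` cancel from the numerator of the product
minus one, leaving `(ε_b² - ε_a²) β`, while the denominator is a product of two factors exceeding `1/2`.
-/

theorem abs_div_mul_div_sub_one_le {K : Type*} [Field K] [LinearOrder K] [IsStrictOrderedRing K]
    {a b c d : K} (hb : 1 / 2 < b) (hd : 1 / 2 < d) :
    |a / b * (c / d) - 1| ≤ 4 * |a * c - b * d| := by
  have hbd : 1 / 4 < b * d := by nlinarith
  have hbd₀ : 0 < b * d := by linarith
  rw [div_mul_div_comm, div_sub_one hbd₀.ne', abs_div, abs_of_pos hbd₀, div_le_iff₀ hbd₀]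
  nlinarith [abs_nonneg (a * c - b * d)]

theorem abs_sq_sub_sq_le {K : Type*} [Field K] [LinearOrder K] [IsStrictOrderedRing K]
    {x y ε : K} (hx : |x| ≤ ε) (hy : |y| ≤ ε) : |x ^ 2 - y ^ 2| ≤ ε ^ 2 := by
  have hsq {z : K} (hz : |z| ≤ ε) : z ^ 2 ≤ ε ^ 2 := by
    simpa only [sq_abs] using pow_le_pow_left₀ (abs_nonneg z) hz 2
  exact abs_sub_le_of_nonneg_of_le (sq_nonneg x) (hsq hx) (sq_nonneg y) (hsq hy)

theorem stmt10_general (α μ εa εb β ε B : ℝ)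
    (hεa : |εa| ≤ ε) (hεb : |εb| ≤ ε) (hβ : |β| ≤ B)
    (h2 : (1 - μ) * (1 - α) + εb + (εa + εb) * β > 1 / 2)
    (h3 : (1 - μ) * (1 - α) + εa > 1 / 2) :
    |(((1 - μ) * (1 - α) + εa + (εa + εb) * β) /
        ((1 - μ) * (1 - α) + εb + (εa + εb) * β)) *
      (((1 - μ) * (1 - α) + εb) / ((1 - μ) * (1 - α) + εa)) - 1|
      ≤ 16 * ε ^ 2 * B := by
  have hB : 0 ≤ B := (abs_nonneg β).trans hβ
  calc _ ≤ 4 * |((1 - μ) * (1 - α) + εa + (εa + εb) * β) * ((1 - μ) * (1 - α) + εb) -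
          ((1 - μ) * (1 - α) + εb + (εa + εb) * β) * ((1 - μ) * (1 - α) + εa)| :=
        abs_div_mul_div_sub_one_le h2 h3
    _ = 4 * (|εb ^ 2 - εa ^ 2| * |β|) := by rw [← abs_mul]; ring_nf
    _ ≤ 4 * (ε ^ 2 * B) := by gcongr; exact abs_sq_sub_sq_le hεb hεa
    _ ≤ 16 * ε ^ 2 * B := by nlinarith [mul_nonneg (sq_nonneg ε) hB]

/-- the cancellation estimate for the ratio product. -/
theorem stmt10 (α μ εa εb β ε B : ℝ)
    (hμ0 : 0 < μ) (hμ : μ < 1 / 2)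
    (hεa : |εa| ≤ ε) (hεb : |εb| ≤ ε) (hβ : |β| ≤ B)
    (h1 : (1 - μ) * (1 - α) + εa + (εa + εb) * β > 1 / 2)
    (h2 : (1 - μ) * (1 - α) + εb + (εa + εb) * β > 1 / 2)
    (h3 : (1 - μ) * (1 - α) + εa > 1 / 2)
    (h4 : (1 - μ) * (1 - α) + εb > 1 / 2) :
    |(((1 - μ) * (1 - α) + εa + (εa + εb) * β) /
        ((1 - μ) * (1 - α) + εb + (εa + εb) * β)) *
      (((1 - μ) * (1 - α) + εb) / ((1 - μ) * (1 - α) + εa)) - 1|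
      ≤ 16 * ε ^ 2 * B :=
  stmt10_general α μ εa εb β ε B hεa hεb hβ h2 h3
end

section
/- Let d be a k-graphical sequence, K a (k−1)-set and a, b ∉ K distinct, with P_{K+a}(d − e_{K+a}) < 1 and d − e_{K+a} k-graphical. Define Y_{a,K,b}(d) = N_{a+K, K+b}(d)/N(d). Then Y_{a,K,b}(d) = [P_{K+a}(d)/(1 − P_{K+a}(d − e_{K+a}))]·(P_{K+b}(d − e_{K+a}) − Y_{a,K,b}(d − e_{K+a})). -/
/-!
Deleting an edge `S` (a `k`-set) from a hypergraph lowers its degree sequence by `e_S`, so the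
hypergraphs with degrees `d' = d - e_S` either contain `S` or arise from a hypergraph with
degrees `d` containing `S` by deleting it. Hence `N(d') = N_S(d') + N_S(d)` and, for `T ≠ S`,
`N_T(d') = N_{S,T}(d') + N_{S,T}(d)`; that is, `N_S(d) = N(d') (1 - P_S(d'))` and
`N_{S,T}(d) = N(d') (P_T(d') - Y(d'))`, and the recursion is their quotient. If `S` is not a
`k`-set, every count involving `S` vanishes and both sides are `0`.
-/

open Finset

/-- The degree sequence of a hypergraph `H` on vertex set `Fin n`. -/
def degSeq {n : ℕ} (H : Finset (Finset (Fin n))) : Fin n → ℤ :=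
  fun v => (H.filter (fun e => v ∈ e)).card

/-- The number of `k`-uniform hypergraphs on `[n]` with degree sequence `d`. -/
noncomputable def Ncount (n k : ℕ) (d : Fin n → ℤ) : ℕ :=
  {H : Finset (Finset (Fin n)) | (∀ e ∈ H, e.card = k) ∧ degSeq H = d}.ncard

/-- The number of such hypergraphs containing the edge `S`. -/
noncomputable def NcountE (n k : ℕ) (S : Finset (Fin n)) (d : Fin n → ℤ) : ℕ :=
  {H : Finset (Finset (Fin n)) | (∀ e ∈ H, e.card = k) ∧ degSeq H = d ∧ S ∈ H}.ncard

/-- The number of such hypergraphs containing both edges `S` and `T`. -/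
noncomputable def NcountEE (n k : ℕ) (S T : Finset (Fin n)) (d : Fin n → ℤ) : ℕ :=
  {H : Finset (Finset (Fin n)) | (∀ e ∈ H, e.card = k) ∧ degSeq H = d ∧ S ∈ H ∧ T ∈ H}.ncard

/-- `P_S(d)`: edge probability. -/
noncomputable def Pedge (n k : ℕ) (S : Finset (Fin n)) (d : Fin n → ℤ) : ℝ :=
  (NcountE n k S d : ℝ) / (Ncount n k d : ℝ)

/-- `Y_{a,K,b}(d) = N_{a+K,K+b}(d)/N(d)`: the two-edge path probability. -/
noncomputable def Ypath (n k : ℕ) (a : Fin n) (K : Finset (Fin n)) (b : Fin n)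
    (d : Fin n → ℤ) : ℝ :=
  (NcountEE n k (insert a K) (insert b K) d : ℝ) / (Ncount n k d : ℝ)

/-- The indicator vector `e_S` of a vertex set `S`. -/
def indic {n : ℕ} (S : Finset (Fin n)) : Fin n → ℤ := fun v => if v ∈ S then 1 else 0

/-- `N_P(d)`: as `Ncount`, counting only hypergraphs with property `P`. -/
noncomputable def NcountWith (n k : ℕ) (P : Finset (Finset (Fin n)) → Prop) (d : Fin n → ℤ) : ℕ :=
  {H : Finset (Finset (Fin n)) | (∀ e ∈ H, e.card = k) ∧ degSeq H = d ∧ P H}.ncard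

section NcountWith

variable {n k : ℕ}

theorem Ncount_eq_NcountWith (d : Fin n → ℤ) : Ncount n k d = NcountWith n k (fun _ => True) d := by
  simp only [Ncount, NcountWith, and_true]

theorem NcountE_eq_NcountWith (S : Finset (Fin n)) (d : Fin n → ℤ) :
    NcountE n k S d = NcountWith n k (fun H => S ∈ H ∧ True) d := by
  simp only [NcountE, NcountWith, and_true]

theorem NcountEE_eq_NcountWith (S T : Finset (Fin n)) (d : Fin n → ℤ) :
    NcountEE n k S T d = NcountWith n k (fun H => S ∈ H ∧ T ∈ H) d :=
  rfl

theorem NcountWith_eq_zero_of_card_ne {S : Finset (Fin n)} {P : Finset (Finset (Fin n)) → Prop}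
    (hS : S.card ≠ k) (hPS : ∀ H, P H → S ∈ H) (d : Fin n → ℤ) : NcountWith n k P d = 0 := by
  rw [NcountWith, Set.ncard_eq_zero]
  ext H
  simp only [Set.mem_ofPred_eq, Set.mem_empty_iff_false, iff_false]
  exact fun ⟨hunif, _, hP⟩ => hS (hunif S (hPS H hP))

theorem NcountE_eq_zero_of_card_ne {S : Finset (Fin n)} (hS : S.card ≠ k) (d : Fin n → ℤ) :
    NcountE n k S d = 0 := by
  rw [NcountE_eq_NcountWith]
  exact NcountWith_eq_zero_of_card_ne hS (fun _ h => h.1) d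

theorem NcountEE_eq_zero_of_card_ne {S : Finset (Fin n)} (hS : S.card ≠ k) (T : Finset (Fin n))
    (d : Fin n → ℤ) : NcountEE n k S T d = 0 :=
  NcountWith_eq_zero_of_card_ne hS (fun _ h => h.1) d

theorem NcountWith_eq_add (Q P : Finset (Finset (Fin n)) → Prop) (d : Fin n → ℤ) :
    NcountWith n k P d
      = NcountWith n k (fun H => Q H ∧ P H) d + NcountWith n k (fun H => ¬Q H ∧ P H) d := by
  rw [NcountWith, ← Set.ncard_inter_add_ncard_sdiff_eq_ncard _ {H | Q H} (Set.toFinite _)]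
  congr 2 <;> ext H <;> simp only [Set.mem_inter_iff, Set.mem_sdiff, Set.mem_ofPred_eq] <;> tauto

theorem degSeq_insert {H : Finset (Finset (Fin n))} {S : Finset (Fin n)} (hS : S ∉ H) :
    degSeq (insert S H) = degSeq H + indic S := by
  funext v
  simp only [degSeq, indic, Pi.add_apply, Finset.filter_insert]
  split_ifs with hv
  · rw [Finset.card_insert_of_notMem (fun h => hS (Finset.mem_filter.mp h).1)]
    push_cast
    ring
  · simp

/-- Adding the edge `S` is the bijection, with inverse `(·.erase S)`. -/
theorem NcountWith_notMem_sub_indic {S : Finset (Fin n)} {P : Finset (Finset (Fin n)) → Prop}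
    (hS : S.card = k) (hP : ∀ H, S ∉ H → (P (insert S H) ↔ P H)) (d : Fin n → ℤ) :
    NcountWith n k (fun H => S ∉ H ∧ P H) (d - indic S) = NcountWith n k (fun H => S ∈ H ∧ P H) d := by
  have himage : insert S ''
      {H : Finset (Finset (Fin n)) | (∀ e ∈ H, e.card = k) ∧ degSeq H = d - indic S ∧ S ∉ H ∧ P H}
      = {H | (∀ e ∈ H, e.card = k) ∧ degSeq H = d ∧ S ∈ H ∧ P H} := by
    ext H'
    constructor
    · rintro ⟨H, ⟨hunif, hdeg, hSH, hPH⟩, rfl⟩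
      refine ⟨?_, ?_, Finset.mem_insert_self S H, (hP H hSH).mpr hPH⟩
      · simpa only [Finset.forall_mem_insert] using ⟨hS, hunif⟩
      · rw [degSeq_insert hSH, hdeg, sub_add_cancel]
    · rintro ⟨hunif, hdeg, hSH', hPH'⟩
      have hSH : S ∉ H'.erase S := Finset.notMem_erase S H'
      have hinsert : insert S (H'.erase S) = H' := Finset.insert_erase hSH'
      refine ⟨H'.erase S, ⟨fun e he => hunif e (Finset.mem_of_mem_erase he), ?_, hSH, ?_⟩, hinsert⟩
      · rw [← hdeg, ← hinsert, degSeq_insert hSH, add_sub_cancel_right, hinsert]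
      · rw [← hP _ hSH, hinsert]
        exact hPH'
  rw [NcountWith, NcountWith, ← himage, Set.InjOn.ncard_image]
  rintro H₁ ⟨-, -, h₁, -⟩ H₂ ⟨-, -, h₂, -⟩ heq
  rw [← Finset.erase_insert h₁, ← Finset.erase_insert h₂]
  exact congrArg (·.erase S) heq

theorem NcountWith_sub_indic {S : Finset (Fin n)} {P : Finset (Finset (Fin n)) → Prop}
    (hS : S.card = k) (hP : ∀ H, S ∉ H → (P (insert S H) ↔ P H)) (d : Fin n → ℤ) :
    NcountWith n k P (d - indic S)
      = NcountWith n k (fun H => S ∈ H ∧ P H) (d - indic S)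
        + NcountWith n k (fun H => S ∈ H ∧ P H) d := by
  rw [NcountWith_eq_add (S ∈ ·), NcountWith_notMem_sub_indic hS hP]

theorem Ncount_sub_indic {S : Finset (Fin n)} (hS : S.card = k) (d : Fin n → ℤ) :
    Ncount n k (d - indic S) = NcountE n k S (d - indic S) + NcountE n k S d := by
  simp only [Ncount_eq_NcountWith, NcountE_eq_NcountWith]
  exact NcountWith_sub_indic hS (fun _ _ => Iff.rfl) d

theorem NcountE_sub_indic {S T : Finset (Fin n)} (hS : S.card = k) (hTS : T ≠ S) (d : Fin n → ℤ) :
    NcountE n k T (d - indic S) = NcountEE n k S T (d - indic S) + NcountEE n k S T d := by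
  simp only [NcountE_eq_NcountWith, NcountEE_eq_NcountWith, and_true]
  exact NcountWith_sub_indic hS (fun H _ => by simp [hTS]) d

end NcountWith

theorem stmt15_general (n k : ℕ) (d : Fin n → ℤ) (K : Finset (Fin n)) (a b : Fin n)
    (hb : b ∉ K) (hab : a ≠ b)
    (hgr' : 0 < Ncount n k (d - indic (insert a K)))
    (hP : Pedge n k (insert a K) (d - indic (insert a K)) < 1) :
    Ypath n k a K b d
      = Pedge n k (insert a K) d / (1 - Pedge n k (insert a K) (d - indic (insert a K)))
          * (Pedge n k (insert b K) (d - indic (insert a K))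
              - Ypath n k a K b (d - indic (insert a K))) := by
  by_cases hS : (insert a K).card = k
  swap
  · rw [Ypath, Pedge, NcountEE_eq_zero_of_card_ne hS, NcountE_eq_zero_of_card_ne hS]
    simp
  have hTS : insert b K ≠ insert a K := fun h =>
    (Finset.mem_insert.mp (h ▸ Finset.mem_insert_self b K)).elim hab.symm hb
  set d' := d - indic (insert a K)
  have hN : (Ncount n k d' : ℝ) = NcountE n k (insert a K) d' + NcountE n k (insert a K) d := by
    exact_mod_cast Ncount_sub_indic hS d
  have hNE : (NcountE n k (insert b K) d' : ℝ)
      = NcountEE n k (insert a K) (insert b K) d' + NcountEE n k (insert a K) (insert b K) d := by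
    exact_mod_cast NcountE_sub_indic hS hTS d
  have hx : (0 : ℝ) < Ncount n k d' := by exact_mod_cast hgr'
  rw [Pedge, div_lt_one hx] at hP
  have hu : (NcountE n k (insert a K) d : ℝ) ≠ 0 := by linarith
  simp only [Ypath, Pedge]
  rw [← sub_div, one_sub_div hx.ne', hNE, hN, add_sub_cancel_left, add_sub_cancel_left]
  rw [hN] at hx
  field_simp

/-- the recursion for the path probability `Y_{a,K,b}`. -/
theorem stmt15 (n k : ℕ) (d : Fin n → ℤ) (K : Finset (Fin n)) (a b : Fin n)
    (hK : K.card = k - 1) (ha : a ∉ K) (hb : b ∉ K) (hab : a ≠ b)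
    (hgr : 0 < Ncount n k d)
    (hgr' : 0 < Ncount n k (d - indic (insert a K)))
    (hP : Pedge n k (insert a K) (d - indic (insert a K)) < 1) :
    Ypath n k a K b d
      = Pedge n k (insert a K) d / (1 - Pedge n k (insert a K) (d - indic (insert a K)))
          * (Pedge n k (insert b K) (d - indic (insert a K))
              - Ypath n k a K b (d - indic (insert a K))) :=
  stmt15_general n k d K a b hb hab hgr' hP
end
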